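/- arXiv:1505.01876 — 2 statements merged into one kernel-verified Lean document; each statement's English description precedes it below -/
import Mathlib

section
/- Let P_t f(x) = E[f(e^{tA}x + Y_t)] be the Ornstein–Uhlenbeck semigroup on ℝ^d and let f(x) = e^{i⟨h,x⟩}. Then for each x ∈ ℝ^d the map t ↦ P_t f(x) is differentiable on [0,∞) and ∂_t P_t f(x) = L₀(P_t f)(x), where L₀g(x) = ⟨Ax, Dg(x)⟩ + L₁g(x). -/
open MeasureTheory Filter

variable {d : ℕ}

/-- The matrix exponential `e^{tA}`. -/
noncomputable def ouExp (A : EuclideanSpace ℝ (Fin d) →L[ℝ] EuclideanSpace ℝ (Fin d)) (t : ℝ) :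
    EuclideanSpace ℝ (Fin d) →L[ℝ] EuclideanSpace ℝ (Fin d) :=
  NormedSpace.exp (t • A)

/-- The non-local part `L₁` of the Ornstein–Uhlenbeck operator on complex-valued functions. -/
noncomputable def L1c (Q : EuclideanSpace ℝ (Fin d) →L[ℝ] EuclideanSpace ℝ (Fin d))
    (a : EuclideanSpace ℝ (Fin d)) (ν : Measure (EuclideanSpace ℝ (Fin d)))
    (f : EuclideanSpace ℝ (Fin d) → ℂ) (x : EuclideanSpace ℝ (Fin d)) : ℂ :=
  (∫ y, (f (x + y) - f x - (if ‖y‖ ≤ 1 then fderiv ℝ f x y else 0)) ∂ν)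
    + (1 / 2 : ℂ) * ∑ i : Fin d,
        fderiv ℝ (fun z => fderiv ℝ f z (Q (EuclideanSpace.basisFun (Fin d) ℝ i))) x
          (EuclideanSpace.basisFun (Fin d) ℝ i)
    + fderiv ℝ f x a

/-- The Ornstein–Uhlenbeck operator `L₀g(x) = ⟨Ax, Dg(x)⟩ + L₁g(x)`. -/
noncomputable def L0c (A Q : EuclideanSpace ℝ (Fin d) →L[ℝ] EuclideanSpace ℝ (Fin d))
    (a : EuclideanSpace ℝ (Fin d)) (ν : Measure (EuclideanSpace ℝ (Fin d)))
    (f : EuclideanSpace ℝ (Fin d) → ℂ) (x : EuclideanSpace ℝ (Fin d)) : ℂ :=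
  fderiv ℝ f x (A x) + L1c Q a ν f x

/-- The Lévy–Khintchine exponent associated with `(Q, a, ν)`. -/
noncomputable def levyExponent (Q : EuclideanSpace ℝ (Fin d) →L[ℝ] EuclideanSpace ℝ (Fin d))
    (a : EuclideanSpace ℝ (Fin d)) (ν : Measure (EuclideanSpace ℝ (Fin d)))
    (u : EuclideanSpace ℝ (Fin d)) : ℂ :=
  (1 / 2 : ℂ) * ((inner ℝ (Q u) u : ℝ) : ℂ) - Complex.I * ((inner ℝ a u : ℝ) : ℂ)
    - ∫ y, (Complex.exp (Complex.I * ((inner ℝ u y : ℝ) : ℂ)) - 1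
        - (if ‖y‖ ≤ 1 then Complex.I * ((inner ℝ u y : ℝ) : ℂ) else 0)) ∂ν

/-! The plane wave `f = e^{i⟨u,·⟩}` is an eigenfunction of the Lévy–Khintchine operator,
`L₁ f = -ψ(u) f`, and the drift term gives `⟨Ax, Df(x)⟩ = i⟨u, Ax⟩ f(x)`. Differentiating the
explicit formula for `P_t f(x)` in `t`, with `u = e^{tA*}h`, produces the factor
`i⟨A*u, x⟩ - ψ(u)`, which is the same. The only analytic input is the continuity of `ψ`
(dominated convergence, using `|e^{iθ} - 1 - iθ 1_{|y|≤1}| ≤ 2(1 + |u|²) min(1, |y|²)`), so that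
the fundamental theorem of calculus applies to `∫₀ᵗ ψ(e^{sA*}h) ds`. -/
open Complex

local notation "E" => EuclideanSpace ℝ (Fin d)

theorem norm_cexp_I_mul_sub_one_sub_le (θ : ℝ) :
    ‖exp (I * θ) - 1 - I * θ‖ ≤ 2 * θ ^ 2 := by
  have hIθ : ‖I * (θ : ℂ)‖ = |θ| := by simp
  rcases le_or_gt |θ| 1 with hθ | hθ
  · calc ‖exp (I * θ) - 1 - I * θ‖ ≤ ‖I * (θ : ℂ)‖ ^ 2 :=
          norm_exp_sub_one_sub_id_le (hIθ ▸ hθ)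
      _ ≤ 2 * θ ^ 2 := by rw [hIθ, sq_abs]; nlinarith [sq_nonneg θ]
  · calc ‖exp (I * θ) - 1 - I * θ‖ ≤ ‖exp (I * θ) - 1‖ + ‖I * (θ : ℂ)‖ := norm_sub_le _ _
      _ ≤ |θ| + |θ| := by rw [hIθ]; gcongr; exact Real.norm_exp_I_mul_ofReal_sub_one_le
      _ ≤ 2 * θ ^ 2 := by nlinarith [sq_abs θ]

theorem OrthonormalBasis.sum_inner_map_mul_inner {ι F : Type*} [Fintype ι] [NormedAddCommGroup F]
    [InnerProductSpace ℝ F] (b : OrthonormalBasis ι ℝ F) (Q : F →L[ℝ] F) (u : F) :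
    ∑ i, inner ℝ u (b i) * inner ℝ u (Q (b i)) = inner ℝ (Q u) u := by
  calc _ = inner ℝ u (Q (∑ i, inner ℝ (b i) u • b i)) := by
        simp only [map_sum, map_smul, inner_sum, inner_smul_right, real_inner_comm u]
    _ = _ := by rw [b.sum_repr', real_inner_comm]

section PlaneWave

variable {F : Type*} [NormedAddCommGroup F] [InnerProductSpace ℝ F]

noncomputable def planeWave (u z : F) : ℂ :=
  exp (I * (inner ℝ u z : ℝ))

noncomputable def levyKernel (u y : F) : ℂ :=
  exp (I * (inner ℝ u y : ℝ)) - 1 - if ‖y‖ ≤ 1 then I * (inner ℝ u y : ℝ) else 0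

theorem hasFDerivAt_planeWave (u x : F) :
    HasFDerivAt (planeWave u) (planeWave u x • I • ofRealCLM.comp (innerSL ℝ u)) x :=
  ((ofRealCLM.comp (innerSL ℝ u)).hasFDerivAt.const_mul I).cexp

theorem fderiv_planeWave_mul_const_apply (u x v : F) (C : ℂ) :
    fderiv ℝ (fun z => planeWave u z * C) x v = I * (inner ℝ u v : ℝ) * (planeWave u x * C) := by
  rw [((hasFDerivAt_planeWave u x).mul_const C).fderiv]
  simp only [FunLike.coe_smul, Pi.smul_apply, ContinuousLinearMap.comp_apply, innerSL_apply_apply,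
    ofRealCLM_apply, smul_eq_mul]
  ring

theorem fderiv_fderiv_planeWave_mul_const_apply (u x v w : F) (C : ℂ) :
    fderiv ℝ (fun z => fderiv ℝ (fun z' => planeWave u z' * C) z w) x v
      = -((inner ℝ u v : ℝ) * (inner ℝ u w : ℝ)) * (planeWave u x * C) := by
  have hw : (fun z => fderiv ℝ (fun z' => planeWave u z' * C) z w)
      = fun z => planeWave u z * (I * (inner ℝ u w : ℝ) * C) := by
    funext z
    rw [fderiv_planeWave_mul_const_apply]
    ring
  rw [hw, fderiv_planeWave_mul_const_apply]
  linear_combination ((inner ℝ u v : ℝ) * (inner ℝ u w : ℝ) * (planeWave u x * C) : ℂ) * I_sq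

theorem planeWave_add_sub_sub_fderiv_eq (u x y : F) (C : ℂ) :
    planeWave u (x + y) * C - planeWave u x * C
        - (if ‖y‖ ≤ 1 then fderiv ℝ (fun z => planeWave u z * C) x y else 0)
      = planeWave u x * C * levyKernel u y := by
  have hadd : planeWave u (x + y) = planeWave u x * exp (I * (inner ℝ u y : ℝ)) := by
    rw [planeWave, planeWave, inner_add_right, ofReal_add, mul_add, exp_add]
  rw [hadd, levyKernel, fderiv_planeWave_mul_const_apply]
  split_ifs <;> ring

theorem hasDerivAt_planeWave_mul_cexp_neg_integral {u : ℝ → F} {u' : F} {φ : ℝ → ℂ} {t : ℝ}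
    (hu : HasDerivAt u u' t) (hφ : Continuous φ) (x : F) :
    HasDerivAt (fun τ => planeWave (u τ) x * exp (-∫ s in (0 : ℝ)..τ, φ s))
      ((I * (inner ℝ u' x : ℝ) - φ t) * (planeWave (u t) x * exp (-∫ s in (0 : ℝ)..t, φ s)))
      t := by
  have hwave : HasDerivAt (fun τ => planeWave (u τ) x)
      (planeWave (u t) x * (I * (inner ℝ u' x : ℝ))) t :=
    ((hu.inner ℝ (hasDerivAt_const t x)).ofReal_comp.const_mul I).cexp.congr_deriv
      (by simp [planeWave])
  have hdamping : HasDerivAt (fun τ => exp (-∫ s in (0 : ℝ)..τ, φ s))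
      (exp (-∫ s in (0 : ℝ)..t, φ s) * -φ t) t :=
    (hφ.integral_hasStrictDerivAt 0 t).hasDerivAt.neg.cexp
  exact (hwave.mul hdamping).congr_deriv (by ring)

theorem norm_levyKernel_le (u y : F) :
    ‖levyKernel u y‖ ≤ 2 * (‖u‖ ^ 2 + 1) * min 1 (‖y‖ ^ 2) := by
  rw [levyKernel]
  split_ifs with hy
  · have hmin : min 1 (‖y‖ ^ 2) = ‖y‖ ^ 2 := min_eq_right (pow_le_one₀ (norm_nonneg y) hy)
    have hinner : (inner ℝ u y) ^ 2 ≤ ‖u‖ ^ 2 * ‖y‖ ^ 2 := by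
      rw [← mul_pow, ← sq_abs]
      exact pow_le_pow_left₀ (abs_nonneg _) (abs_real_inner_le_norm u y) 2
    calc _ ≤ 2 * (inner ℝ u y) ^ 2 := norm_cexp_I_mul_sub_one_sub_le _
      _ ≤ 2 * (‖u‖ ^ 2 + 1) * min 1 (‖y‖ ^ 2) := by rw [hmin]; nlinarith [sq_nonneg ‖y‖]
  · have hmin : min 1 (‖y‖ ^ 2) = 1 := min_eq_left (one_le_pow₀ (le_of_lt (not_le.mp hy)))
    calc _ ≤ ‖exp (I * (inner ℝ u y : ℝ))‖ + ‖(1 : ℂ)‖ := by rw [sub_zero]; exact norm_sub_le _ _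
      _ = 2 := by rw [norm_exp_I_mul_ofReal, norm_one]; norm_num
      _ ≤ 2 * (‖u‖ ^ 2 + 1) * min 1 (‖y‖ ^ 2) := by rw [hmin]; nlinarith [sq_nonneg ‖u‖]

theorem continuous_integral_levyKernel [MeasurableSpace F] [OpensMeasurableSpace F]
    {ν : Measure F} (hν : Integrable (fun y => min 1 (‖y‖ ^ 2)) ν) :
    Continuous fun u => ∫ y, levyKernel u y ∂ν := by
  refine continuous_iff_continuousAt.2 fun u₀ => continuousAt_of_dominated
    (bound := fun y => 2 * ((‖u₀‖ + 1) ^ 2 + 1) * min 1 (‖y‖ ^ 2)) ?_ ?_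
    (hν.const_mul _) (ae_of_all _ fun y => ?_)
  · refine Eventually.of_forall fun u => Measurable.aestronglyMeasurable ?_
    unfold levyKernel
    exact (by fun_prop : Measurable _).sub
      (Measurable.ite (measurableSet_le measurable_norm measurable_const) (by fun_prop)
        measurable_const)
  · filter_upwards [Metric.ball_mem_nhds u₀ one_pos] with u hu
    refine ae_of_all _ fun y => (norm_levyKernel_le u y).trans ?_
    have : ‖u‖ ≤ ‖u₀‖ + 1 := by
      linarith [norm_le_norm_add_norm_sub' u u₀, (mem_ball_iff_norm.mp hu).le]
    gcongr
  · unfold levyKernel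
    split_ifs <;> fun_prop

end PlaneWave

theorem levyExponent_eq (Q : E →L[ℝ] E) (a : E) (ν : Measure E) (u : E) :
    levyExponent Q a ν u
      = (1 / 2 : ℂ) * (inner ℝ (Q u) u : ℝ) - I * (inner ℝ a u : ℝ) - ∫ y, levyKernel u y ∂ν :=
  rfl

theorem continuous_levyExponent (Q : E →L[ℝ] E) (a : E) {ν : Measure E}
    (hν : Integrable (fun y => min 1 (‖y‖ ^ 2)) ν) :
    Continuous (levyExponent Q a ν) := by
  simp only [funext (levyExponent_eq Q a ν)]
  exact (by fun_prop : Continuous _).sub (continuous_integral_levyKernel hν)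

theorem L1c_planeWave_mul_const (Q : E →L[ℝ] E) (a : E) (ν : Measure E) (u x : E) (C : ℂ) :
    L1c Q a ν (fun z => planeWave u z * C) x = -levyExponent Q a ν u * (planeWave u x * C) := by
  have hjump : ∫ y, (planeWave u (x + y) * C - planeWave u x * C
        - (if ‖y‖ ≤ 1 then fderiv ℝ (fun z => planeWave u z * C) x y else 0)) ∂ν
      = planeWave u x * C * ∫ y, levyKernel u y ∂ν := by
    simp only [planeWave_add_sub_sub_fderiv_eq, integral_const_mul]
  have hdiffusion : ∑ i, fderiv ℝ (fun z => fderiv ℝ (fun z' => planeWave u z' * C) z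
        (Q (EuclideanSpace.basisFun (Fin d) ℝ i))) x (EuclideanSpace.basisFun (Fin d) ℝ i)
      = -(inner ℝ (Q u) u : ℝ) * (planeWave u x * C) := by
    simp only [fderiv_fderiv_planeWave_mul_const_apply]
    rw [← Finset.sum_mul, Finset.sum_neg_distrib,
      ← (EuclideanSpace.basisFun (Fin d) ℝ).sum_inner_map_mul_inner Q u]
    push_cast
    rfl
  rw [L1c, hjump, hdiffusion, fderiv_planeWave_mul_const_apply, levyExponent_eq,
    real_inner_comm a u]
  ring

theorem L0c_planeWave_mul_const (A Q : E →L[ℝ] E) (a : E) (ν : Measure E) (u x : E) (C : ℂ) :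
    L0c A Q a ν (fun z => planeWave u z * C) x
      = (I * (inner ℝ u (A x) : ℝ) - levyExponent Q a ν u) * (planeWave u x * C) := by
  rw [L0c, L1c_planeWave_mul_const, fderiv_planeWave_mul_const_apply]
  ring

theorem hasDerivAt_ouExp_apply (B : E →L[ℝ] E) (h : E) (t : ℝ) :
    HasDerivAt (fun s => ouExp B s h) (B (ouExp B t h)) t :=
  ((hasDerivAt_exp_smul_const' B t).clm_apply (hasDerivAt_const t h)).congr_deriv
    (by simp [ouExp])

theorem ou_semigroup_deriv_exponential_general
    (A Q : EuclideanSpace ℝ (Fin d) →L[ℝ] EuclideanSpace ℝ (Fin d))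
    (a : EuclideanSpace ℝ (Fin d)) (ν : Measure (EuclideanSpace ℝ (Fin d)))
    (hνint : Integrable (fun y => min 1 (‖y‖ ^ 2)) ν)
    (h : EuclideanSpace ℝ (Fin d))
    -- P_t f for f = e^{i⟨h,·⟩}, given by the characteristic-function formula
    (P : ℝ → EuclideanSpace ℝ (Fin d) → ℂ)
    (hP : ∀ t : ℝ, 0 ≤ t → ∀ x,
      P t x = Complex.exp (Complex.I *
          ((inner ℝ (ouExp (ContinuousLinearMap.adjoint A) t h) x : ℝ) : ℂ)) *
        Complex.exp (- ∫ s in (0:ℝ)..t,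
          levyExponent Q a ν (ouExp (ContinuousLinearMap.adjoint A) s h))) :
    ∀ t : ℝ, 0 ≤ t → ∀ x,
      HasDerivWithinAt (fun τ => P τ x) (L0c A Q a ν (P t) x) (Set.Ici 0) t := by
  intro t ht x
  set B := ContinuousLinearMap.adjoint A
  have hψ : Continuous fun s => levyExponent Q a ν (ouExp B s h) :=
    (continuous_levyExponent Q a hνint).comp
      (continuous_iff_continuousAt.2 fun s => (hasDerivAt_ouExp_apply B h s).continuousAt)
  have hPt : P t = fun z => planeWave (ouExp B t h) z *
      exp (-∫ s in (0 : ℝ)..t, levyExponent Q a ν (ouExp B s h)) :=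
    funext (hP t ht)
  have hderiv := hasDerivAt_planeWave_mul_cexp_neg_integral (hasDerivAt_ouExp_apply B h t) hψ x
  rw [hPt, L0c_planeWave_mul_const, ← ContinuousLinearMap.adjoint_inner_left]
  exact hderiv.hasDerivWithinAt.congr (fun τ hτ => hP τ hτ x) (hP t ht x)

/-- for `f(x) = e^{i⟨h,x⟩}`, the map `t ↦ P_t f(x)` is differentiable on
`[0,∞)` with `∂_t P_t f(x) = L₀(P_t f)(x)`, where
`P_t f(x) = e^{i⟨e^{tA*}h, x⟩} exp(−∫_0^t ψ(e^{sA*}h) ds)`. -/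
theorem ou_semigroup_deriv_exponential
    (A Q : EuclideanSpace ℝ (Fin d) →L[ℝ] EuclideanSpace ℝ (Fin d))
    (a : EuclideanSpace ℝ (Fin d)) (ν : Measure (EuclideanSpace ℝ (Fin d)))
    (hQsym : IsSelfAdjoint Q) (hQpos : ∀ u, 0 ≤ (inner ℝ (Q u) u : ℝ))
    (hν0 : ν {0} = 0)
    (hνint : Integrable (fun y => min 1 (‖y‖ ^ 2)) ν)
    (h : EuclideanSpace ℝ (Fin d))
    -- P_t f for f = e^{i⟨h,·⟩}, given by the characteristic-function formula
    (P : ℝ → EuclideanSpace ℝ (Fin d) → ℂ)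
    (hP : ∀ t : ℝ, 0 ≤ t → ∀ x,
      P t x = Complex.exp (Complex.I *
          ((inner ℝ (ouExp (ContinuousLinearMap.adjoint A) t h) x : ℝ) : ℂ)) *
        Complex.exp (- ∫ s in (0:ℝ)..t,
          levyExponent Q a ν (ouExp (ContinuousLinearMap.adjoint A) s h))) :
    ∀ t : ℝ, 0 ≤ t → ∀ x,
      HasDerivWithinAt (fun τ => P τ x) (L0c A Q a ν (P t) x) (Set.Ici 0) t :=
  ou_semigroup_deriv_exponential_general A Q a ν hνint h P hP
end

section
/- (Integrated exponentials form an invariant class.) Let φ_{a,h}(x) = ∫_0^a e^{i⟨e^{sA}x, h⟩} e^{−∫_0^s ψ(e^{rA*}h)dr} ds for a > 0 and h ∈ D(A*). Then for each t > 0, P_t φ_{a,h} = φ_{a+t,h} − φ_{t,h}; consequently the linear span 𝒟₁ of real and imaginary parts of the functions φ_{a,h} satisfies P_t(𝒟₁) ⊆ 𝒟₁ for all t ≥ 0. -/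
open MeasureTheory

variable {H : Type*} [NormedAddCommGroup H] [InnerProductSpace ℝ H] [CompleteSpace H]
  [MeasurableSpace H] [BorelSpace H]

/-- The integrated exponential
`φ_{a,h}(x) = ∫_0^a e^{i⟨e^{sA}x, h⟩} e^{−∫_0^s ψ(e^{rA*}h) dr} ds`,
where `S t = e^{tA}`. -/
noncomputable def phiExp (S : ℝ → H →L[ℝ] H) (ψ : H → ℂ) (a : ℝ) (h : H) (x : H) : ℂ :=
  ∫ s in (0:ℝ)..a,
    Complex.exp (Complex.I * ((inner ℝ (S s x) h : ℝ) : ℂ)) *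
      Complex.exp (- ∫ r in (0:ℝ)..s, ψ (ContinuousLinearMap.adjoint (S r) h))

/-- The Ornstein–Uhlenbeck (generalised Mehler) semigroup acting on complex-valued
functions. -/
noncomputable def mehlerC (S : ℝ → H →L[ℝ] H) (μ : ℝ → Measure H) (t : ℝ)
    (f : H → ℂ) (x : H) : ℂ :=
  ∫ y, f (S t x + y) ∂(μ t)

/-- The Ornstein–Uhlenbeck (generalised Mehler) semigroup acting on real-valued
functions. -/
noncomputable def mehlerR (S : ℝ → H →L[ℝ] H) (μ : ℝ → Measure H) (t : ℝ)
    (f : H → ℝ) (x : H) : ℝ :=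
  ∫ y, f (S t x + y) ∂(μ t)

/-- `𝒟₁`: the linear span of real and imaginary parts of the functions `φ_{a,h}`,
`a > 0`, `h ∈ D(A*)`. -/
noncomputable def D1span (S : ℝ → H →L[ℝ] H) (ψ : H → ℂ) (domAstar : Set H) :
    Submodule ℝ (H → ℝ) :=
  Submodule.span ℝ
    ({g | ∃ a : ℝ, 0 < a ∧ ∃ h ∈ domAstar, g = fun x => (phiExp S ψ a h x).re} ∪
     {g | ∃ a : ℝ, 0 < a ∧ ∃ h ∈ domAstar, g = fun x => (phiExp S ψ a h x).im})

/-!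
With `e_h = e^{i⟨·, h⟩}` one has `φ_{a,h} = ∫_0^a P_s e_h ds`, and the characteristic functions
of the measures `μ_t` give `P_t P_s e_h = P_{s+t} e_h`. Exchanging `P_t` with the `ds`-integral
(Fubini, the integrand is bounded) and shifting `s ↦ s + t` yields
`P_t φ_{a,h} = φ_{a+t,h} − φ_{t,h}`. Since `P_t` commutes with real and imaginary parts, it maps
the generators of `𝒟₁` into `𝒟₁`, hence all of `𝒟₁` by linearity.

The analytic input is the strong continuity of `r ↦ S(r)* h`, which makes `∫_0^s ψ(S(r)* h) dr`
additive in `s` and the integrand jointly continuous. The operators `S(r)*` are locally bounded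
(Banach–Steinhaus), and `S(δ)* w → w` for the weak averages `w = ∫_0^ε S(r)* h dr`; these span
a dense subspace, because a vector `v` orthogonal to all of them has `∫_0^ε ⟨S(r) v, v⟩ dr = 0`
for all small `ε`, hence `‖v‖² = 0`.
-/

open Set Filter Topology
open scoped InnerProductSpace

theorem IsCompact.exists_opNorm_le_of_continuousOn {X E F : Type*} [TopologicalSpace X]
    [NormedAddCommGroup E] [NormedSpace ℝ E] [CompleteSpace E]
    [NormedAddCommGroup F] [NormedSpace ℝ F] {K : Set X} (hK : IsCompact K)
    {T : X → E →L[ℝ] F} (hT : ∀ x, ContinuousOn (fun t => T t x) K) :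
    ∃ M, ∀ t ∈ K, ‖T t‖ ≤ M := by
  have hbdd : ∀ x, ∃ C, ∀ t : K, ‖T t x‖ ≤ C := fun x =>
    let ⟨C, hC⟩ := hK.exists_bound_of_continuousOn (hT x)
    ⟨C, fun t => hC t t.2⟩
  obtain ⟨M, hM⟩ := banach_steinhaus hbdd
  exact ⟨M, fun t ht => hM ⟨t, ht⟩⟩

theorem tendsto_apply_of_dense_span {E : Type*} [NormedAddCommGroup E] [NormedSpace ℝ E]
    {ι : Type*} {l : Filter ι} {T : ι → E →L[ℝ] E} {C : ℝ} (hT : ∀ᶠ i in l, ‖T i‖ ≤ C)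
    {D : Set E} (hD : Dense (Submodule.span ℝ D : Set E))
    (hDT : ∀ w ∈ D, Tendsto (fun i => T i w) l (𝓝 w)) (v : E) :
    Tendsto (fun i => T i v) l (𝓝 v) := by
  have hspan : ∀ w ∈ Submodule.span ℝ D, Tendsto (fun i => T i w) l (𝓝 w) := by
    intro w hw
    induction hw using Submodule.span_induction with
    | mem w hw => exact hDT w hw
    | zero => simpa using tendsto_const_nhds
    | add w w' _ _ hw hw' => simpa using hw.add hw'
    | smul c w _ hw => simpa using hw.const_smul c
  rw [Metric.tendsto_nhds]
  intro ε hε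
  obtain ⟨w, hvw, hwD⟩ := Metric.dense_iff.1 hD v (ε / (2 * (|C| + 1))) (by positivity)
  rw [Metric.mem_ball, dist_eq_norm'] at hvw
  filter_upwards [hT, Metric.tendsto_nhds.1 (hspan w hwD) (ε / 2) (by positivity)] with i hTi hi
  rw [dist_eq_norm] at hi ⊢
  calc ‖T i v - v‖ = ‖T i (v - w) + (T i w - w) - (v - w)‖ := by
        rw [map_sub]; abel_nf
    _ ≤ ‖T i‖ * ‖v - w‖ + ‖T i w - w‖ + ‖v - w‖ :=
        (norm_sub_le _ _).trans (add_le_add_left (norm_add_le_of_le ((T i).le_opNorm _) le_rfl) _)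
    _ ≤ (|C| + 1) * ‖v - w‖ + ‖T i w - w‖ := by
        nlinarith [le_abs_self C, norm_nonneg (v - w)]
    _ < (|C| + 1) * (ε / (2 * (|C| + 1))) + ε / 2 := by gcongr
    _ = ε := by field_simp; ring

theorem eq_zero_of_forall_intervalIntegral_eq_zero {E : Type*} [NormedAddCommGroup E]
    [NormedSpace ℝ E] [CompleteSpace E] {f : ℝ → E} {a b : ℝ} (hab : a < b)
    (hf : ContinuousOn f (Ici a)) (h : ∀ u ∈ Ioc a b, ∫ x in a..u, f x = 0) : f a = 0 := by
  have hderiv : HasDerivWithinAt (fun u => ∫ x in a..u, f x) (f a) (Ioi a) a :=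
    (intervalIntegral.integral_hasDerivWithinAt_right (s := Ici a) .refl
      ((hf.mono Ioi_subset_Ici_self).stronglyMeasurableAtFilter_nhdsWithin measurableSet_Ioi a)
      ((hf a self_mem_Ici).mono Ioi_subset_Ici_self)).mono Ioi_subset_Ici_self
  have hzero : HasDerivWithinAt (fun u => ∫ x in a..u, f x) 0 (Ioi a) a := by
    refine (hasDerivWithinAt_const a (Ioi a) (0 : E)).congr_of_eventuallyEq ?_ (by simp)
    filter_upwards [Ioc_mem_nhdsGT hab] with u hu using h u hu
  exact (uniqueDiffWithinAt_Ioi a).eq_deriv _ hderiv hzero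

theorem norm_le_of_forall_inner_le {E : Type*} [NormedAddCommGroup E] [InnerProductSpace ℝ E]
    {v : E} {C : ℝ} (hC : 0 ≤ C) (h : ∀ x, ⟪v, x⟫_ℝ ≤ C * ‖x‖) : ‖v‖ ≤ C := by
  have := h v
  rw [real_inner_self_eq_norm_sq] at this
  nlinarith [norm_nonneg v]

structure IsStronglyContinuousSemigroup {E : Type*} [NormedAddCommGroup E] [NormedSpace ℝ E]
    (S : ℝ → E →L[ℝ] E) : Prop where
  map_zero : S 0 = ContinuousLinearMap.id ℝ E
  map_add : ∀ s t : ℝ, 0 ≤ s → 0 ≤ t → S (s + t) = S s ∘L S t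
  continuousOn : ∀ x : E, ContinuousOn (fun t => S t x) (Ici 0)

theorem IsStronglyContinuousSemigroup.exists_norm_le {E : Type*} [NormedAddCommGroup E]
    [NormedSpace ℝ E] [CompleteSpace E] {S : ℝ → E →L[ℝ] E}
    (hS : IsStronglyContinuousSemigroup S) (T : ℝ) : ∃ M, ∀ r ∈ Icc 0 T, ‖S r‖ ≤ M :=
  isCompact_Icc.exists_opNorm_le_of_continuousOn fun x =>
    (hS.continuousOn x).mono Icc_subset_Ici_self

/-- The vectors `∫_0^ε S(r)* h dr`, `0 ≤ ε ≤ 1`, given by their weak definition. -/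
def averagedVectors {E : Type*} [NormedAddCommGroup E] [InnerProductSpace ℝ E]
    (S : ℝ → E →L[ℝ] E) : Set E :=
  {w | ∃ h : E, ∃ ε ∈ Icc (0 : ℝ) 1, ∀ x, ⟪w, x⟫_ℝ = ∫ r in 0..ε, ⟪S r x, h⟫_ℝ}

section Adjoint

variable {E : Type*} [NormedAddCommGroup E] [InnerProductSpace ℝ E] {S : ℝ → E →L[ℝ] E}

open ContinuousLinearMap

theorem norm_intervalIntegral_inner_le {M T u v : ℝ} (hM : ∀ r ∈ Icc 0 T, ‖S r‖ ≤ M)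
    (hu : 0 ≤ u) (huv : u ≤ v) (hvT : v ≤ T) (x h : E) :
    ‖∫ r in u..v, ⟪S r x, h⟫_ℝ‖ ≤ M * ‖x‖ * ‖h‖ * (v - u) := by
  have hbound : ∀ r ∈ uIoc u v, ‖⟪S r x, h⟫_ℝ‖ ≤ M * ‖x‖ * ‖h‖ := by
    intro r hr
    rw [uIoc_of_le huv] at hr
    calc ‖⟪S r x, h⟫_ℝ‖ ≤ ‖S r x‖ * ‖h‖ := norm_inner_le_norm _ _
      _ ≤ ‖S r‖ * ‖x‖ * ‖h‖ := by gcongr; exact (S r).le_opNorm x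
      _ ≤ M * ‖x‖ * ‖h‖ := by gcongr; exact hM r ⟨hu.trans hr.1.le, hr.2.trans hvT⟩
  simpa [abs_of_nonneg (sub_nonneg.2 huv)] using
    intervalIntegral.norm_integral_le_of_norm_le_const hbound

theorem IsStronglyContinuousSemigroup.intervalIntegrable_inner
    (hS : IsStronglyContinuousSemigroup S) (x h : E) {u v : ℝ} (hu : 0 ≤ u) (hv : 0 ≤ v) :
    IntervalIntegrable (fun r => ⟪S r x, h⟫_ℝ) volume u v :=
  (((hS.continuousOn x).inner continuousOn_const).mono
    fun _ hr => (le_min hu hv).trans hr.1).intervalIntegrable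

variable [CompleteSpace E]

namespace IsStronglyContinuousSemigroup

theorem adjoint_add (hS : IsStronglyContinuousSemigroup S) {s t : ℝ} (hs : 0 ≤ s) (ht : 0 ≤ t)
    (h : E) : adjoint (S (s + t)) h = adjoint (S t) (adjoint (S s) h) := by
  rw [hS.map_add s t hs ht, adjoint_comp, coe_comp, Function.comp_apply]

theorem exists_inner_eq_intervalIntegral (hS : IsStronglyContinuousSemigroup S) (h : E) {ε : ℝ}
    (hε : 0 ≤ ε) : ∃ w : E, ∀ x, ⟪w, x⟫_ℝ = ∫ r in 0..ε, ⟪S r x, h⟫_ℝ := by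
  obtain ⟨M, hM⟩ := hS.exists_norm_le ε
  let φ : E →ₗ[ℝ] ℝ :=
    { toFun := fun x => ∫ r in 0..ε, ⟪S r x, h⟫_ℝ
      map_add' := fun x y => by
        simp only [_root_.map_add, inner_add_left]
        exact intervalIntegral.integral_add (hS.intervalIntegrable_inner x h le_rfl hε)
          (hS.intervalIntegrable_inner y h le_rfl hε)
      map_smul' := fun c x => by
        simp only [_root_.map_smul, real_inner_smul_left, RingHom.id_apply, smul_eq_mul]
        exact intervalIntegral.integral_const_mul c _ }
  have hφ : ∀ x, ‖φ x‖ ≤ M * ε * ‖h‖ * ‖x‖ := fun x => by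
    have := norm_intervalIntegral_inner_le hM le_rfl hε le_rfl x h
    rw [sub_zero] at this
    exact this.trans_eq (by ring)
  refine ⟨(InnerProductSpace.toDual ℝ E).symm (φ.mkContinuous _ hφ), fun x => ?_⟩
  rw [InnerProductSpace.toDual_symm_apply]
  rfl

theorem inner_adjoint_sub_eq (hS : IsStronglyContinuousSemigroup S) {h w : E} {ε δ : ℝ}
    (hε : 0 ≤ ε) (hδ : 0 ≤ δ) (hw : ∀ x, ⟪w, x⟫_ℝ = ∫ r in 0..ε, ⟪S r x, h⟫_ℝ) (x : E) :
    ⟪adjoint (S δ) w - w, x⟫_ℝ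
      = (∫ r in ε..ε + δ, ⟪S r x, h⟫_ℝ) - ∫ r in 0..δ, ⟪S r x, h⟫_ℝ := by
  have hshift : ⟪adjoint (S δ) w, x⟫_ℝ = ∫ r in δ..ε + δ, ⟪S r x, h⟫_ℝ := by
    have hsub := intervalIntegral.integral_comp_add_right (fun r => ⟪S r x, h⟫_ℝ) δ
      (a := 0) (b := ε)
    rw [zero_add] at hsub
    rw [adjoint_inner_left, hw, ← hsub]
    refine intervalIntegral.integral_congr fun r hr => ?_
    rw [uIcc_of_le hε] at hr
    simp only [hS.map_add r δ hr.1 hδ, comp_apply]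
  have hεδ : 0 ≤ ε + δ := add_nonneg hε hδ
  have hsplit := (intervalIntegral.integral_add_adjacent_intervals
    (hS.intervalIntegrable_inner x h le_rfl hδ) (hS.intervalIntegrable_inner x h hδ hεδ)).trans
    (intervalIntegral.integral_add_adjacent_intervals
      (hS.intervalIntegrable_inner x h le_rfl hε) (hS.intervalIntegrable_inner x h hε hεδ)).symm
  rw [inner_sub_left, hshift, hw]
  linarith

theorem norm_adjoint_sub_le (hS : IsStronglyContinuousSemigroup S) {M : ℝ}
    (hM : ∀ r ∈ Icc 0 2, ‖S r‖ ≤ M) {h w : E} {ε δ : ℝ} (hε : ε ∈ Icc (0 : ℝ) 1)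
    (hδ : δ ∈ Icc (0 : ℝ) 1) (hw : ∀ x, ⟪w, x⟫_ℝ = ∫ r in 0..ε, ⟪S r x, h⟫_ℝ) :
    ‖adjoint (S δ) w - w‖ ≤ 2 * M * ‖h‖ * δ := by
  have hM0 : 0 ≤ M := (norm_nonneg _).trans (hM 0 ⟨le_rfl, zero_le_two⟩)
  refine norm_le_of_forall_inner_le (by have := hδ.1; positivity) fun x => ?_
  rw [hS.inner_adjoint_sub_eq hε.1 hδ.1 hw]
  have h₁ := norm_intervalIntegral_inner_le hM hε.1 (le_add_of_nonneg_right hδ.1)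
    (by linarith [hε.2, hδ.2]) x h
  have h₂ := norm_intervalIntegral_inner_le hM le_rfl hδ.1 (by linarith [hδ.2]) x h
  rw [Real.norm_eq_abs, abs_le] at h₁ h₂
  nlinarith [norm_nonneg x]

theorem tendsto_adjoint_of_mem_averagedVectors (hS : IsStronglyContinuousSemigroup S) {w : E}
    (hw : w ∈ averagedVectors S) : Tendsto (fun δ => adjoint (S δ) w) (𝓝[≥] 0) (𝓝 w) := by
  obtain ⟨h, ε, hε, hw⟩ := hw
  obtain ⟨M, hM⟩ := hS.exists_norm_le 2
  have hlin : Tendsto (fun δ : ℝ => 2 * M * ‖h‖ * δ) (𝓝[≥] 0) (𝓝 0) := by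
    simpa using ((continuous_const_mul (2 * M * ‖h‖)).tendsto 0).mono_left nhdsWithin_le_nhds
  rw [tendsto_iff_norm_sub_tendsto_zero]
  refine squeeze_zero' (Eventually.of_forall fun _ => norm_nonneg _) ?_ hlin
  filter_upwards [Icc_mem_nhdsGE one_pos] with δ hδ using hS.norm_adjoint_sub_le hM hε hδ hw

theorem dense_span_averagedVectors (hS : IsStronglyContinuousSemigroup S) :
    Dense (Submodule.span ℝ (averagedVectors S) : Set E) := by
  rw [Submodule.dense_iff_topologicalClosure_eq_top, Submodule.topologicalClosure_eq_top_iff,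
    Submodule.eq_bot_iff]
  intro v hv
  have hint : ∀ ε ∈ Ioc (0 : ℝ) 1, ∫ r in 0..ε, ⟪S r v, v⟫_ℝ = 0 := by
    intro ε hε
    obtain ⟨w, hw⟩ := hS.exists_inner_eq_intervalIntegral v hε.1.le
    rw [← hw]
    exact Submodule.inner_right_of_mem_orthogonal
      (Submodule.subset_span (show w ∈ averagedVectors S from ⟨v, ε, ⟨hε.1.le, hε.2⟩, hw⟩)) hv
  have := eq_zero_of_forall_intervalIntegral_eq_zero one_pos
    ((hS.continuousOn v).inner continuousOn_const) hint
  simpa [hS.map_zero] using this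

theorem tendsto_adjoint_nhdsGE_zero (hS : IsStronglyContinuousSemigroup S) (h : E) :
    Tendsto (fun δ => adjoint (S δ) h) (𝓝[≥] 0) (𝓝 h) := by
  obtain ⟨M, hM⟩ := hS.exists_norm_le 1
  refine tendsto_apply_of_dense_span (C := M) ?_ hS.dense_span_averagedVectors
    (fun w hw => hS.tendsto_adjoint_of_mem_averagedVectors hw) h
  filter_upwards [Icc_mem_nhdsGE one_pos] with δ hδ
  rw [LinearIsometryEquiv.norm_map]
  exact hM δ hδ

theorem norm_adjoint_sub_adjoint_le (hS : IsStronglyContinuousSemigroup S) {u v : ℝ}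
    (hu : 0 ≤ u) (huv : u ≤ v) (h : E) :
    ‖adjoint (S v) h - adjoint (S u) h‖ ≤ ‖S u‖ * ‖adjoint (S (v - u)) h - h‖ := by
  have hv : adjoint (S v) h = adjoint (S u) (adjoint (S (v - u)) h) := by
    simpa using hS.adjoint_add (sub_nonneg.2 huv) hu h
  rw [hv, ← map_sub, ← LinearIsometryEquiv.norm_map adjoint (S u)]
  exact (adjoint (S u)).le_opNorm _

theorem continuousOn_adjoint (hS : IsStronglyContinuousSemigroup S) (h : E) :
    ContinuousOn (fun r => adjoint (S r) h) (Ici 0) := by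
  intro r₀ hr₀
  obtain ⟨M, hM⟩ := hS.exists_norm_le (r₀ + 1)
  have hbound : ∀ r ∈ Icc 0 (r₀ + 1),
      ‖adjoint (S r) h - adjoint (S r₀) h‖ ≤ M * ‖adjoint (S |r - r₀|) h - h‖ := by
    intro r hr
    rcases le_total r₀ r with hle | hle
    · rw [abs_of_nonneg (sub_nonneg.2 hle)]
      refine (hS.norm_adjoint_sub_adjoint_le hr₀ hle h).trans ?_
      gcongr
      exact hM r₀ ⟨hr₀, by linarith⟩
    · rw [abs_of_nonpos (sub_nonpos.2 hle), neg_sub, norm_sub_rev]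
      refine (hS.norm_adjoint_sub_adjoint_le hr.1 hle h).trans ?_
      gcongr
      exact hM r hr
  have hdist : Tendsto (fun r => |r - r₀|) (𝓝[Ici 0] r₀) (𝓝[≥] 0) := by
    refine tendsto_nhdsWithin_iff.2 ⟨?_, Eventually.of_forall fun r => mem_Ici.2 (abs_nonneg _)⟩
    simpa using ((continuous_id.sub (continuous_const (y := r₀))).abs.tendsto r₀).mono_left
      (nhdsWithin_le_nhds (s := Ici 0))
  have hlim : Tendsto (fun r => M * ‖adjoint (S |r - r₀|) h - h‖) (𝓝[Ici 0] r₀) (𝓝 0) := by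
    simpa using ((tendsto_iff_norm_sub_tendsto_zero.1
      (hS.tendsto_adjoint_nhdsGE_zero h)).comp hdist).const_mul M
  rw [ContinuousWithinAt, tendsto_iff_norm_sub_tendsto_zero]
  refine squeeze_zero' (Eventually.of_forall fun _ => norm_nonneg _) ?_ hlim
  filter_upwards [self_mem_nhdsWithin, nhdsWithin_le_nhds (Iic_mem_nhds (lt_add_one r₀))]
    with r hr hr' using hbound r ⟨hr, hr'⟩

end IsStronglyContinuousSemigroup

end Adjoint

/-- The formula for `P_s e^{i⟨·, h⟩}`; `φ_{a,h}` is its integral over `s ∈ [0, a]`. -/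
noncomputable def mehlerExp {E : Type*} [NormedAddCommGroup E] [InnerProductSpace ℝ E]
    [CompleteSpace E] (S : ℝ → E →L[ℝ] E) (ψ : E → ℂ) (h : E) (s : ℝ) (x : E) : ℂ :=
  Complex.exp (Complex.I * ((⟪S s x, h⟫_ℝ : ℝ) : ℂ)) *
    Complex.exp (-∫ r in (0 : ℝ)..s, ψ (ContinuousLinearMap.adjoint (S r) h))

section MehlerExp

variable {E : Type*} [NormedAddCommGroup E] [InnerProductSpace ℝ E] [CompleteSpace E]
  {S : ℝ → E →L[ℝ] E} {ψ : E → ℂ}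

open ContinuousLinearMap

namespace IsStronglyContinuousSemigroup

theorem intervalIntegrable_comp_adjoint (hS : IsStronglyContinuousSemigroup S)
    (hψ : Continuous ψ) (h : E) {u v : ℝ} (hu : 0 ≤ u) (hv : 0 ≤ v) :
    IntervalIntegrable (fun r => ψ (adjoint (S r) h)) volume u v :=
  (hψ.comp_continuousOn ((hS.continuousOn_adjoint h).mono
    fun _ hr => (le_min hu hv).trans hr.1)).intervalIntegrable

theorem continuousOn_integral_comp_adjoint (hS : IsStronglyContinuousSemigroup S)
    (hψ : Continuous ψ) (h : E) :
    ContinuousOn (fun s => ∫ r in (0 : ℝ)..s, ψ (adjoint (S r) h)) (Ici 0) := by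
  have hg : Continuous fun r => ψ (adjoint (S (max r 0)) h) :=
    hψ.comp ((hS.continuousOn_adjoint h).comp_continuous (continuous_id.max continuous_const)
      fun r => le_max_right r 0)
  refine (intervalIntegral.continuous_primitive (fun _ _ => hg.intervalIntegrable _ _)
    0).continuousOn.congr fun s hs => intervalIntegral.integral_congr fun r hr => ?_
  rw [uIcc_of_le hs] at hr
  simp only [max_eq_left hr.1]

theorem integral_comp_adjoint_adjoint (hS : IsStronglyContinuousSemigroup S)
    (hψ : Continuous ψ) (h : E) {s t : ℝ} (hs : 0 ≤ s) (ht : 0 ≤ t) :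
    ∫ r in (0 : ℝ)..t, ψ (adjoint (S r) (adjoint (S s) h))
      = (∫ r in (0 : ℝ)..s + t, ψ (adjoint (S r) h)) - ∫ r in (0 : ℝ)..s, ψ (adjoint (S r) h) := by
  have hshift := intervalIntegral.integral_comp_add_left (fun r => ψ (adjoint (S r) h)) s
    (a := 0) (b := t)
  rw [add_zero] at hshift
  rw [intervalIntegral.integral_interval_sub_left
      (hS.intervalIntegrable_comp_adjoint hψ h le_rfl (add_nonneg hs ht))
      (hS.intervalIntegrable_comp_adjoint hψ h le_rfl hs), ← hshift]
  refine intervalIntegral.integral_congr fun r hr => ?_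
  rw [uIcc_of_le ht] at hr
  simp only [hS.adjoint_add hs hr.1]

theorem continuousOn_mehlerExp (hS : IsStronglyContinuousSemigroup S) (hψ : Continuous ψ)
    (h : E) : ContinuousOn (fun p : ℝ × E => mehlerExp S ψ h p.1 p.2) (Ici 0 ×ˢ univ) := by
  have hinner : ContinuousOn (fun p : ℝ × E => ⟪p.2, adjoint (S p.1) h⟫_ℝ) (Ici 0 ×ˢ univ) :=
    continuous_snd.continuousOn.inner
      ((hS.continuousOn_adjoint h).comp continuous_fst.continuousOn fun _ hp => hp.1)
  have hK := (hS.continuousOn_integral_comp_adjoint hψ h).comp continuous_fst.continuousOn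
    fun (p : ℝ × E) (hp : p ∈ Ici 0 ×ˢ univ) => hp.1
  refine ContinuousOn.congr (f := fun p : ℝ × E =>
      Complex.exp (Complex.I * (⟪p.2, adjoint (S p.1) h⟫_ℝ : ℂ)) *
        Complex.exp (-∫ r in (0 : ℝ)..p.1, ψ (adjoint (S r) h)))
    ((continuousOn_const.mul (Complex.continuous_ofReal.comp_continuousOn hinner)).cexp.mul
      hK.neg.cexp) fun p _ => ?_
  simp only [mehlerExp, adjoint_inner_right]

end IsStronglyContinuousSemigroup

theorem norm_mehlerExp (h : E) (s : ℝ) (x : E) :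
    ‖mehlerExp S ψ h s x‖ = ‖mehlerExp S ψ h s 0‖ := by
  simp only [mehlerExp, norm_mul, Complex.norm_exp_I_mul_ofReal]

end MehlerExp

section Mehler

open ContinuousLinearMap

variable {S : ℝ → H →L[ℝ] H} {ψ : H → ℂ} {μ : ℝ → Measure H}

omit [BorelSpace H] in
theorem mehlerC_mehlerExp (hS : IsStronglyContinuousSemigroup S) (hψ : Continuous ψ) {t s : ℝ}
    (ht : 0 ≤ t) (hs : 0 ≤ s)
    (hμt : ∀ h : H, ∫ y, Complex.exp (Complex.I * ((⟪h, y⟫_ℝ : ℝ) : ℂ)) ∂(μ t)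
      = Complex.exp (-∫ r in (0 : ℝ)..t, ψ (adjoint (S r) h))) (h x : H) :
    mehlerC S μ t (mehlerExp S ψ h s) x = mehlerExp S ψ h (s + t) x := by
  have hsplit : ∀ y, mehlerExp S ψ h s (S t x + y)
      = (Complex.exp (Complex.I * ((⟪S (s + t) x, h⟫_ℝ : ℝ) : ℂ)) *
          Complex.exp (-∫ r in (0 : ℝ)..s, ψ (adjoint (S r) h))) *
        Complex.exp (Complex.I * ((⟪adjoint (S s) h, y⟫_ℝ : ℝ) : ℂ)) := fun y => by
    rw [mehlerExp, map_add, inner_add_left, adjoint_inner_left, real_inner_comm h (S s y),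
      hS.map_add s t hs ht, comp_apply]
    push_cast
    rw [mul_add, Complex.exp_add]
    ring
  rw [mehlerC]
  simp_rw [hsplit]
  rw [integral_const_mul, hμt, hS.integral_comp_adjoint_adjoint hψ h hs ht, mehlerExp,
    mul_assoc, ← Complex.exp_add]
  ring_nf

theorem integrable_mehlerExp_comp_add (hS : IsStronglyContinuousSemigroup S) (hψ : Continuous ψ)
    (ν : Measure H) [IsFiniteMeasure ν] (h z : H) (a : ℝ) :
    Integrable (fun p : ℝ × H => mehlerExp S ψ h p.1 (z + p.2))
      ((volume.restrict (Ioc 0 a)).prod ν) := by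
  have hcont : ContinuousOn (fun p : ℝ × H => mehlerExp S ψ h p.1 (z + p.2)) (Ioc 0 a ×ˢ univ) :=
    (hS.continuousOn_mehlerExp hψ h).comp (f := fun p : ℝ × H => (p.1, z + p.2))
      (by fun_prop) fun p hp => ⟨mem_Ici.2 hp.1.1.le, mem_univ _⟩
  obtain ⟨C, hC⟩ := isCompact_Icc.exists_bound_of_continuousOn
    ((hS.continuousOn_mehlerExp hψ h).comp (f := fun s : ℝ => (s, (0 : H))) (by fun_prop)
      fun s (hs : s ∈ Icc 0 a) => ⟨mem_Ici.2 hs.1, mem_univ (0 : H)⟩)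
  have hprod : (volume.restrict (Ioc 0 a)).prod ν = (volume.prod ν).restrict (Ioc 0 a ×ˢ univ) := by
    rw [← Measure.prod_restrict, Measure.restrict_univ]
  refine Integrable.of_bound
    (hprod ▸ hcont.aestronglyMeasurable (measurableSet_Ioc.prod .univ)) C ?_
  rw [hprod]
  filter_upwards [ae_restrict_mem (measurableSet_Ioc.prod .univ)] with p hp
  rw [norm_mehlerExp]
  exact hC p.1 (Ioc_subset_Icc_self hp.1)

theorem mehlerC_phiExp (hS : IsStronglyContinuousSemigroup S) (hψ : Continuous ψ) {t a : ℝ}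
    (ht : 0 ≤ t) (ha : 0 ≤ a) [IsFiniteMeasure (μ t)]
    (hμt : ∀ h : H, ∫ y, Complex.exp (Complex.I * ((⟪h, y⟫_ℝ : ℝ) : ℂ)) ∂(μ t)
      = Complex.exp (-∫ r in (0 : ℝ)..t, ψ (adjoint (S r) h))) (h x : H) :
    mehlerC S μ t (phiExp S ψ a h) x = phiExp S ψ (a + t) h x - phiExp S ψ t h x := by
  have hint : ∀ b, 0 ≤ b → IntervalIntegrable (fun s => mehlerExp S ψ h s x) volume 0 b :=
    fun b hb => ((hS.continuousOn_mehlerExp hψ h).comp (f := fun s : ℝ => (s, x)) (by fun_prop)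
      fun s hs => ⟨mem_Ici.2 (by rw [uIcc_of_le hb] at hs; exact hs.1),
        mem_univ x⟩).intervalIntegrable
  have hswap := intervalIntegral_integral_swap (a := 0) (b := a)
    (f := fun s y => mehlerExp S ψ h s (S t x + y)) (μ := μ t)
    (by rw [uIoc_of_le ha]; exact integrable_mehlerExp_comp_add hS hψ (μ t) h (S t x) a)
  calc mehlerC S μ t (phiExp S ψ a h) x
      = ∫ s in (0 : ℝ)..a, ∫ y, mehlerExp S ψ h s (S t x + y) ∂(μ t) := hswap.symm
    _ = ∫ s in (0 : ℝ)..a, mehlerExp S ψ h (s + t) x := by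
      refine intervalIntegral.integral_congr fun s hs => ?_
      rw [uIcc_of_le ha] at hs
      exact mehlerC_mehlerExp hS hψ ht hs.1 hμt h x
    _ = ∫ s in t..a + t, mehlerExp S ψ h s x := by
      simpa using intervalIntegral.integral_comp_add_right (fun s => mehlerExp S ψ h s x) t
        (a := 0) (b := a)
    _ = phiExp S ψ (a + t) h x - phiExp S ψ t h x :=
      (intervalIntegral.integral_interval_sub_left (hint _ (by linarith)) (hint t ht)).symm

theorem integrable_phiExp_comp_add (hS : IsStronglyContinuousSemigroup S) (hψ : Continuous ψ)
    (ν : Measure H) [IsFiniteMeasure ν] (h z : H) {a : ℝ} (ha : 0 ≤ a) :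
    Integrable (fun y => phiExp S ψ a h (z + y)) ν :=
  (integrable_mehlerExp_comp_add hS hψ ν h z a).integral_prod_right.congr
    (Eventually.of_forall fun _ => (intervalIntegral.integral_of_le ha).symm)

theorem mehlerR_clm_comp_phiExp (hS : IsStronglyContinuousSemigroup S) (hψ : Continuous ψ)
    {t a : ℝ} (ht : 0 ≤ t) (ha : 0 ≤ a) [IsFiniteMeasure (μ t)]
    (hμt : ∀ h : H, ∫ y, Complex.exp (Complex.I * ((⟪h, y⟫_ℝ : ℝ) : ℂ)) ∂(μ t)
      = Complex.exp (-∫ r in (0 : ℝ)..t, ψ (adjoint (S r) h))) (L : ℂ →L[ℝ] ℝ) (h x : H) :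
    mehlerR S μ t (fun z => L (phiExp S ψ a h z)) x
      = L (phiExp S ψ (a + t) h x) - L (phiExp S ψ t h x) := by
  rw [mehlerR, L.integral_comp_comm (integrable_phiExp_comp_add hS hψ (μ t) h (S t x) ha),
    ← map_sub]
  exact congrArg L (mehlerC_phiExp hS hψ ht ha hμt h x)

omit [CompleteSpace H] [BorelSpace H] in
theorem mehlerR_mem_of_mem_span {t : ℝ} {G : Set (H → ℝ)} {V : Submodule ℝ (H → ℝ)}
    (hG : ∀ g ∈ G, (∀ x, Integrable (fun y => g (S t x + y)) (μ t)) ∧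
      (fun x => mehlerR S μ t g x) ∈ V) {f : H → ℝ} (hf : f ∈ Submodule.span ℝ G) :
    (fun x => mehlerR S μ t f x) ∈ V := by
  suffices (∀ x, Integrable (fun y => f (S t x + y)) (μ t)) ∧
      (fun x => mehlerR S μ t f x) ∈ V from this.2
  induction hf using Submodule.span_induction with
  | mem g hg => exact hG g hg
  | zero =>
    refine ⟨fun x => integrable_zero _ _ _, ?_⟩
    have hzero : (fun x => mehlerR S μ t 0 x) = 0 := funext fun _ => integral_zero _ _
    rw [hzero]
    exact V.zero_mem
  | add f g _ _ hf hg =>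
    refine ⟨fun x => (hf.1 x).add (hg.1 x), ?_⟩
    have hadd : (fun x => mehlerR S μ t (f + g) x)
        = (fun x => mehlerR S μ t f x) + fun x => mehlerR S μ t g x :=
      funext fun x => integral_add (hf.1 x) (hg.1 x)
    rw [hadd]
    exact V.add_mem hf.2 hg.2
  | smul c f _ hf =>
    refine ⟨fun x => (hf.1 x).smul c, ?_⟩
    have hsmul : (fun x => mehlerR S μ t (c • f) x) = c • fun x => mehlerR S μ t f x :=
      funext fun x => integral_smul c _
    rw [hsmul]
    exact V.smul_mem c hf.2

omit [MeasurableSpace H] [BorelSpace H] in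
theorem clm_comp_phiExp_mem_D1span {domAstar : Set H} {L : ℂ →L[ℝ] ℝ}
    (hL : L = Complex.reCLM ∨ L = Complex.imCLM) {a : ℝ} (ha : 0 ≤ a) {h : H}
    (hh : h ∈ domAstar) : (fun x => L (phiExp S ψ a h x)) ∈ D1span S ψ domAstar := by
  rcases ha.eq_or_lt with rfl | ha
  · have hzero : (fun x => L (phiExp S ψ 0 h x)) = 0 := funext fun x => by simp [phiExp]
    rw [hzero]
    exact (D1span S ψ domAstar).zero_mem
  · apply Submodule.subset_span
    rcases hL with rfl | rfl
    exacts [.inl ⟨a, ha, h, hh, rfl⟩, .inr ⟨a, ha, h, hh, rfl⟩]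

theorem mehlerR_generator_mem_D1span (hS : IsStronglyContinuousSemigroup S)
    (hψ : Continuous ψ) {domAstar : Set H} {t : ℝ} (ht : 0 ≤ t) [IsFiniteMeasure (μ t)]
    (hμt : ∀ h : H, ∫ y, Complex.exp (Complex.I * ((⟪h, y⟫_ℝ : ℝ) : ℂ)) ∂(μ t)
      = Complex.exp (-∫ r in (0 : ℝ)..t, ψ (adjoint (S r) h))) {g : H → ℝ}
    (hg : g ∈ {g | ∃ a : ℝ, 0 < a ∧ ∃ h ∈ domAstar, g = fun x => (phiExp S ψ a h x).re} ∪
      {g | ∃ a : ℝ, 0 < a ∧ ∃ h ∈ domAstar, g = fun x => (phiExp S ψ a h x).im}) :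
    (∀ x, Integrable (fun y => g (S t x + y)) (μ t)) ∧
      (fun x => mehlerR S μ t g x) ∈ D1span S ψ domAstar := by
  obtain ⟨L, hL, a, ha, h, hh, rfl⟩ : ∃ L : ℂ →L[ℝ] ℝ, (L = Complex.reCLM ∨ L = Complex.imCLM) ∧
      ∃ a : ℝ, 0 < a ∧ ∃ h ∈ domAstar, g = fun x => L (phiExp S ψ a h x) := by
    rcases hg with ⟨a, ha, h, hh, rfl⟩ | ⟨a, ha, h, hh, rfl⟩
    exacts [⟨_, .inl rfl, a, ha, h, hh, rfl⟩, ⟨_, .inr rfl, a, ha, h, hh, rfl⟩]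
  refine ⟨fun x => L.integrable_comp (integrable_phiExp_comp_add hS hψ (μ t) h _ ha.le), ?_⟩
  rw [funext (mehlerR_clm_comp_phiExp hS hψ ht ha.le hμt L h)]
  exact Submodule.sub_mem _ (clm_comp_phiExp_mem_D1span hL (by linarith) hh)
    (clm_comp_phiExp_mem_D1span hL ht hh)

end Mehler

theorem integrated_exponentials_invariant_general
    (S : ℝ → H →L[ℝ] H)
    (hS0 : S 0 = ContinuousLinearMap.id ℝ H)
    (hSadd : ∀ s t : ℝ, 0 ≤ s → 0 ≤ t → S (s + t) = S s ∘L S t)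
    (hScont : ∀ x : H, ContinuousOn (fun t => S t x) (Set.Ici 0))
    (ψ : H → ℂ) (hψ : Continuous ψ)
    (domAstar : Set H)
    (μ : ℝ → Measure H)
    (hμ : ∀ t, IsProbabilityMeasure (μ t))
    -- characteristic functions of the Mehler semigroup measures
    (hμchar : ∀ t : ℝ, 0 ≤ t → ∀ h : H,
      ∫ y, Complex.exp (Complex.I * ((inner ℝ h y : ℝ) : ℂ)) ∂(μ t)
        = Complex.exp (- ∫ r in (0:ℝ)..t, ψ (ContinuousLinearMap.adjoint (S r) h))) :
    (∀ t : ℝ, 0 < t → ∀ a : ℝ, 0 < a → ∀ h ∈ domAstar, ∀ x : H,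
      mehlerC S μ t (phiExp S ψ a h) x = phiExp S ψ (a + t) h x - phiExp S ψ t h x) ∧
    (∀ t : ℝ, 0 ≤ t → ∀ f ∈ D1span S ψ domAstar,
      (fun x => mehlerR S μ t f x) ∈ D1span S ψ domAstar) := by
  have hS : IsStronglyContinuousSemigroup S := ⟨hS0, hSadd, hScont⟩
  refine ⟨fun t ht a ha h _ x => mehlerC_phiExp hS hψ ht.le ha.le (hμchar t ht.le) h x,
    fun t ht f hf => ?_⟩
  exact mehlerR_mem_of_mem_span
    (fun g hg => mehlerR_generator_mem_D1span hS hψ ht (hμchar t ht) hg) hf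

/-- `P_t φ_{a,h} = φ_{a+t,h} − φ_{t,h}` for `t > 0`, `a > 0`,
`h ∈ D(A*)`; consequently the span `𝒟₁` of real and imaginary parts of the `φ_{a,h}`
satisfies `P_t(𝒟₁) ⊆ 𝒟₁` for all `t ≥ 0`. -/
theorem integrated_exponentials_invariant
    (S : ℝ → H →L[ℝ] H)
    (hS0 : S 0 = ContinuousLinearMap.id ℝ H)
    (hSadd : ∀ s t : ℝ, 0 ≤ s → 0 ≤ t → S (s + t) = S s ∘L S t)
    (hScont : ∀ x : H, ContinuousOn (fun t => S t x) (Set.Ici 0))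
    (ψ : H → ℂ) (hψ : Continuous ψ) (hψ0 : ψ 0 = 0)
    (domAstar : Set H)
    (μ : ℝ → Measure H)
    (hμ : ∀ t, IsProbabilityMeasure (μ t))
    -- characteristic functions of the Mehler semigroup measures
    (hμchar : ∀ t : ℝ, 0 ≤ t → ∀ h : H,
      ∫ y, Complex.exp (Complex.I * ((inner ℝ h y : ℝ) : ℂ)) ∂(μ t)
        = Complex.exp (- ∫ r in (0:ℝ)..t, ψ (ContinuousLinearMap.adjoint (S r) h))) :
    (∀ t : ℝ, 0 < t → ∀ a : ℝ, 0 < a → ∀ h ∈ domAstar, ∀ x : H,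
      mehlerC S μ t (phiExp S ψ a h) x = phiExp S ψ (a + t) h x - phiExp S ψ t h x) ∧
    (∀ t : ℝ, 0 ≤ t → ∀ f ∈ D1span S ψ domAstar,
      (fun x => mehlerR S μ t f x) ∈ D1span S ψ domAstar) :=
  integrated_exponentials_invariant_general S hS0 hSadd hScont ψ hψ domAstar μ hμ hμchar
end
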